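/- arXiv:2103.13929 — 7 statements merged into one kernel-verified Lean document; each statement's English description precedes it below -/
import Mathlib

section
/- Let x_1, …, x_m ∈ ℝ^d and let p_1, …, p_m be nonnegative real numbers with ∑_{i=1}^m p_i ≤ 1; set p_0 = 1 − ∑_{i=1}^m p_i. Then ∑_{i=1}^m p_i x_i x_iᵀ − ∑_{i=1}^m ∑_{j=1}^m p_i p_j x_i x_jᵀ ⪰ ∑_{i=1}^m p_i p_0 x_i x_iᵀ, i.e., the difference of the left-hand side and the right-hand side is a positive semidefinite d×d matrix. -/
/-!
Writing `s = ∑ pᵢ`, the subtracted outside-option term turns the matrix into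
`s • ∑ pᵢ xᵢxᵢᵀ - (∑ pᵢ xᵢ)(∑ pⱼ xⱼ)ᵀ`, and twice this equals
`∑ᵢ ∑ⱼ pᵢpⱼ (xᵢ - xⱼ)(xᵢ - xⱼ)ᵀ`, a nonnegative combination of positive semidefinite
rank-one matrices.
-/

open Matrix

namespace Matrix

theorem sum_sum_smul_vecMulVec_sub_sub {ι n R : Type*} [Fintype ι] [CommRing R]
    (p : ι → R) (x : ι → n → R) :
    ∑ i, ∑ j, (p i * p j) • vecMulVec (x i - x j) (x i - x j)
      = (2 : R) • ((∑ i, p i) • ∑ i, p i • vecMulVec (x i) (x i)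
          - ∑ i, ∑ j, (p i * p j) • vecMulVec (x i) (x j)) := by
  have hdiag : ∑ i, ∑ j, (p i * p j) • vecMulVec (x i) (x i)
      = (∑ i, p i) • ∑ i, p i • vecMulVec (x i) (x i) := by
    simp only [Finset.smul_sum, smul_smul, ← Finset.sum_smul, ← Finset.mul_sum, mul_comm]
  have hswap : ∀ f : ι → ι → Matrix n n R,
      ∑ i, ∑ j, (p i * p j) • f j i = ∑ i, ∑ j, (p i * p j) • f i j := fun f => by
    rw [Finset.sum_comm]
    simp only [mul_comm]
  simp only [sub_vecMulVec, vecMulVec_sub, smul_sub, Finset.sum_sub_distrib]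
  rw [hswap (fun i j => vecMulVec (x i) (x j)), hswap (fun i j => vecMulVec (x i) (x i)), hdiag]
  simp only [two_smul]
  abel

theorem posSemidef_sum_smul_sum_smul_vecMulVec_sub {ι n : Type*} [Fintype ι] [Finite n]
    (p : ι → ℝ) (hp : ∀ i, 0 ≤ p i) (x : ι → n → ℝ) :
    ((∑ i, p i) • ∑ i, p i • vecMulVec (x i) (x i)
      - ∑ i, ∑ j, (p i * p j) • vecMulVec (x i) (x j)).PosSemidef := by
  have hpsd : (∑ i, ∑ j, (p i * p j) • vecMulVec (x i - x j) (x i - x j)).PosSemidef := by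
    refine Finset.sum_induction _ PosSemidef (fun _ _ => .add) .zero fun i _ => ?_
    refine Finset.sum_induction _ PosSemidef (fun _ _ => .add) .zero fun j _ => ?_
    simpa using (posSemidef_vecMulVec_self_star (x i - x j)).smul (mul_nonneg (hp i) (hp j))
  rw [sum_sum_smul_vecMulVec_sub_sub] at hpsd
  simpa [smul_smul] using hpsd.smul (inv_nonneg.2 zero_le_two : (0 : ℝ) ≤ 2⁻¹)

end Matrix

theorem stmt1_general {d m : ℕ} (x : Fin m → Fin d → ℝ) (p : Fin m → ℝ)
    (hp0 : ∀ i, 0 ≤ p i) :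
    ((∑ i, p i • vecMulVec (x i) (x i)
        - ∑ i, ∑ j, (p i * p j) • vecMulVec (x i) (x j))
      - ∑ i, (p i * (1 - ∑ j, p j)) • vecMulVec (x i) (x i)).PosSemidef := by
  have houtside : ∑ i, (p i * (1 - ∑ j, p j)) • vecMulVec (x i) (x i)
      = ∑ i, p i • vecMulVec (x i) (x i) - (∑ j, p j) • ∑ i, p i • vecMulVec (x i) (x i) := by
    simp only [mul_one_sub, sub_smul, Finset.sum_sub_distrib, Finset.smul_sum, smul_smul, mul_comm]
  rw [houtside]
  convert posSemidef_sum_smul_sum_smul_vecMulVec_sub p hp0 x using 1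
  abel

/-- Lower bound on the Hessian of the MNL negative log-likelihood:
`∑ᵢ pᵢ xᵢxᵢᵀ − ∑ᵢ∑ⱼ pᵢpⱼ xᵢxⱼᵀ ⪰ ∑ᵢ pᵢ p₀ xᵢxᵢᵀ` where `p₀ = 1 − ∑ᵢ pᵢ`. -/
theorem stmt1 {d m : ℕ} (x : Fin m → Fin d → ℝ) (p : Fin m → ℝ)
    (hp0 : ∀ i, 0 ≤ p i) (hp1 : ∑ i, p i ≤ 1) :
    ((∑ i, p i • vecMulVec (x i) (x i)
        - ∑ i, ∑ j, (p i * p j) • vecMulVec (x i) (x j))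
      - ∑ i, (p i * (1 - ∑ j, p j)) • vecMulVec (x i) (x i)).PosSemidef :=
  stmt1_general x p hp0
end

section
/- Let V ∈ ℝ^{d×d} be a symmetric positive definite matrix and let x_1, …, x_m ∈ ℝ^d. Then det(V + ∑_{i=1}^m x_i x_iᵀ) ≥ det(V) · (1 + ∑_{i=1}^m x_iᵀ V⁻¹ x_i). -/
/-!
Write `V = S²` with `S = √V`. Then `V + ∑ xᵢxᵢᵀ = S (1 + M) S` with `M = S⁻¹ (∑ xᵢxᵢᵀ) S⁻¹`
positive semidefinite and `tr M = ∑ xᵢᵀ V⁻¹ xᵢ`. If `λⱼ ≥ 0` are the eigenvalues of `M`, then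
`det (1 + M) = ∏ (1 + λⱼ) ≥ 1 + ∑ λⱼ = 1 + tr M`.
-/

open Matrix

theorem Finset.one_add_sum_le_prod_one_add {ι R : Type*} [CommSemiring R] [PartialOrder R]
    [IsOrderedRing R] (s : Finset ι) {f : ι → R} (hf : ∀ i ∈ s, 0 ≤ f i) :
    1 + ∑ i ∈ s, f i ≤ ∏ i ∈ s, (1 + f i) := by
  induction s using Finset.cons_induction with
  | empty => simp
  | cons a s ha ih =>
    have hfa : 0 ≤ f a := hf a (Finset.mem_cons_self a s)
    have hfs : ∀ i ∈ s, 0 ≤ f i := fun i hi => hf i (Finset.mem_cons_of_mem hi)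
    rw [Finset.sum_cons, Finset.prod_cons]
    calc 1 + (f a + ∑ i ∈ s, f i)
        ≤ 1 + (f a + ∑ i ∈ s, f i) + f a * ∑ i ∈ s, f i :=
          le_add_of_nonneg_right (mul_nonneg hfa (Finset.sum_nonneg hfs))
      _ = (1 + f a) * (1 + ∑ i ∈ s, f i) := by ring
      _ ≤ (1 + f a) * ∏ i ∈ s, (1 + f i) := by gcongr; exacts [add_nonneg zero_le_one hfa, ih hfs]

namespace Matrix

variable {n : Type*} [Fintype n] [DecidableEq n]

omit [DecidableEq n] in
theorem trace_mul_vecMulVec {R : Type*} [CommSemiring R] (A : Matrix n n R) (x y : n → R) :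
    (A * vecMulVec x y).trace = y ⬝ᵥ A *ᵥ x := by
  rw [mul_vecMulVec, trace_vecMulVec, dotProduct_comm]

theorem PosSemidef.one_add_trace_le_det_one_add {M : Matrix n n ℝ} (hM : M.PosSemidef) :
    1 + M.trace ≤ (1 + M).det := by
  have hMherm := hM.isHermitian
  have hdet : (1 + M).det = ∏ i, (1 + hMherm.eigenvalues i) := by
    set U := hMherm.eigenvectorUnitary
    conv_lhs => rw [hMherm.spectral_theorem, ← map_one (Unitary.conjStarAlgAut ℝ _ U), ← map_add,
      Unitary.conjStarAlgAut_apply, det_conj_of_mul_eq_one (Unitary.mul_star_self_of_mem U.2)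
        (Unitary.star_mul_self_of_mem U.2),
      ← diagonal_one, diagonal_add, det_diagonal]
    rfl
  rw [hdet, hMherm.trace_eq_sum_eigenvalues]
  exact Finset.univ.one_add_sum_le_prod_one_add fun i _ => hM.eigenvalues_nonneg i

open MatrixOrder in
theorem PosDef.det_mul_one_add_trace_inv_mul_le_det_add {V C : Matrix n n ℝ} (hV : V.PosDef)
    (hC : C.PosSemidef) : V.det * (1 + (V⁻¹ * C).trace) ≤ (V + C).det := by
  set S := CFC.sqrt V
  have hSS : S * S = V := CFC.sqrt_mul_sqrt_self V hV.posSemidef.nonneg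
  have hS : S.IsHermitian := (CFC.sqrt_nonneg V).posSemidef.isHermitian
  have hSdet : IsUnit S.det :=
    (isUnit_iff_isUnit_det S).mp (isUnit_of_mul_isUnit_left (hSS ▸ hV.isUnit))
  set M := S⁻¹ * C * S⁻¹
  have hM : M.PosSemidef := by
    have := hC.conjTranspose_mul_mul_same S⁻¹
    rwa [conjTranspose_nonsing_inv, hS.eq] at this
  have hVC : V + C = S * (1 + M) * S := by
    rw [mul_add, add_mul, mul_one, hSS, Matrix.mul_assoc, Matrix.mul_assoc,
      nonsing_inv_mul _ hSdet, Matrix.mul_one, mul_nonsing_inv_cancel_left _ _ hSdet]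
  have htrace : M.trace = (V⁻¹ * C).trace := by
    rw [trace_mul_cycle, ← hSS, Matrix.mul_inv_rev]
  calc V.det * (1 + (V⁻¹ * C).trace) = V.det * (1 + M.trace) := by rw [htrace]
    _ ≤ V.det * (1 + M).det := by gcongr; exacts [hV.det_pos.le, hM.one_add_trace_le_det_one_add]
    _ = (V + C).det := by rw [hVC, det_mul, det_mul, ← hSS, det_mul]; ring

end Matrix

/-- For symmetric positive definite `V`,
`det(V + ∑ᵢ xᵢxᵢᵀ) ≥ det(V)·(1 + ∑ᵢ xᵢᵀ V⁻¹ xᵢ)`. -/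
theorem stmt3 {d m : ℕ} (V : Matrix (Fin d) (Fin d) ℝ) (hV : V.PosDef)
    (x : Fin m → Fin d → ℝ) :
    V.det * (1 + ∑ i, x i ⬝ᵥ V⁻¹ *ᵥ x i)
      ≤ (V + ∑ i, vecMulVec (x i) (x i)).det := by
  have hC : (∑ i, vecMulVec (x i) (x i)).PosSemidef :=
    posSemidef_sum _ fun i _ => by simpa using posSemidef_vecMulVec_self_star (x i)
  have htrace : (V⁻¹ * ∑ i, vecMulVec (x i) (x i)).trace = ∑ i, x i ⬝ᵥ V⁻¹ *ᵥ x i := by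
    simp only [Matrix.mul_sum, trace_sum, trace_mul_vecMulVec]
  rw [← htrace]
  exact hV.det_mul_one_add_trace_inv_mul_le_det_add hC
end

section
/- Let [N] = {1,…,N} with revenues r_i ∈ [0,1], let 𝒮 = {S ⊆ [N] : |S| ≤ K} be the family of assortments of size at most K (with 1 ≤ K ≤ N), and for utilities u : [N] → ℝ define R(S, u) = (∑_{i∈S} r_i exp(u_i)) / (1 + ∑_{j∈S} exp(u_j)). Let S* ∈ 𝒮 maximize R(·, u) over 𝒮, let z : [N] → ℝ satisfy z_i ≥ u_i for every i ∈ S*, and let S_t ∈ 𝒮 maximize R(·, z) over 𝒮. Then R(S*, u) ≤ R(S*, z) ≤ R(S_t, z). -/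
open Finset

/-- The MNL expected revenue of an assortment `S` with revenues `r` and utilities `u`. -/
noncomputable def mnlRev {N : ℕ} (r u : Fin N → ℝ) (S : Finset (Fin N)) : ℝ :=
  (∑ i ∈ S, r i * Real.exp (u i)) / (1 + ∑ j ∈ S, Real.exp (u j))

/-- If `S*` is optimal for utilities `u`, `z ≥ u` on `S*`, and `S_t` is optimal for `z`,
then `R(S*,u) ≤ R(S*,z) ≤ R(S_t,z)`. -/
theorem stmt8 {N K : ℕ} (hK1 : 1 ≤ K) (hKN : K ≤ N)
    (r : Fin N → ℝ) (hr0 : ∀ i, 0 ≤ r i) (hr1 : ∀ i, r i ≤ 1)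
    (u z : Fin N → ℝ)
    (Sstar : Finset (Fin N)) (hSstar_card : Sstar.card ≤ K)
    (hSstar_opt : ∀ S : Finset (Fin N), S.card ≤ K → mnlRev r u S ≤ mnlRev r u Sstar)
    (hz : ∀ i ∈ Sstar, u i ≤ z i)
    (St : Finset (Fin N)) (hSt_card : St.card ≤ K)
    (hSt_opt : ∀ S : Finset (Fin N), S.card ≤ K → mnlRev r z S ≤ mnlRev r z St) :
    mnlRev r u Sstar ≤ mnlRev r z Sstar ∧ mnlRev r z Sstar ≤ mnlRev r z St := by
  refine ⟨?_, hSt_opt Sstar hSstar_card⟩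
  set A := ∑ i ∈ Sstar, r i * Real.exp (u i) with hA
  set B := 1 + ∑ j ∈ Sstar, Real.exp (u j) with hB
  have hsum_nonneg : (0:ℝ) ≤ ∑ j ∈ Sstar, Real.exp (u j) :=
    Finset.sum_nonneg fun j _ => (Real.exp_pos _).le
  have hBpos : (0:ℝ) < B := by rw [hB]; linarith
  set c := mnlRev r u Sstar with hc
  have hcB : c * B = A := by
    rw [hc, mnlRev, ← hA, ← hB, div_mul_cancel₀ _ (ne_of_gt hBpos)]
  -- each item in Sstar has revenue at least c
  have hri : ∀ i ∈ Sstar, c ≤ r i := by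
    intro i hi
    have hcard : (Sstar.erase i).card ≤ K :=
      le_trans (Finset.card_le_card (Finset.erase_subset i Sstar)) hSstar_card
    have h1 := hSstar_opt (Sstar.erase i) hcard
    have hA' : ∑ j ∈ Sstar.erase i, r j * Real.exp (u j)
        = A - r i * Real.exp (u i) := by
      rw [hA, Finset.sum_erase_eq_sub hi]
    have hB' : (1 + ∑ j ∈ Sstar.erase i, Real.exp (u j))
        = B - Real.exp (u i) := by
      rw [hB, Finset.sum_erase_eq_sub hi]; ring
    have hsum' : (0:ℝ) ≤ ∑ j ∈ Sstar.erase i, Real.exp (u j) :=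
      Finset.sum_nonneg fun j _ => (Real.exp_pos _).le
    have hBpos' : (0:ℝ) < B - Real.exp (u i) := by
      rw [← hB']; linarith
    simp only [mnlRev] at h1
    rw [hA', hB', div_le_iff₀ hBpos'] at h1
    have hexp : (0:ℝ) < Real.exp (u i) := Real.exp_pos _
    nlinarith [h1, hcB]
  -- main inequality
  have hsumz : (0:ℝ) ≤ ∑ j ∈ Sstar, Real.exp (z j) :=
    Finset.sum_nonneg fun j _ => (Real.exp_pos _).le
  have hBzpos : (0:ℝ) < 1 + ∑ j ∈ Sstar, Real.exp (z j) := by linarith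
  show c ≤ mnlRev r z Sstar
  simp only [mnlRev]
  rw [le_div_iff₀ hBzpos]
  have hkey : ∑ i ∈ Sstar, (r i - c) * Real.exp (u i)
      ≤ ∑ i ∈ Sstar, (r i - c) * Real.exp (z i) := by
    apply Finset.sum_le_sum
    intro i hi
    exact mul_le_mul_of_nonneg_left (Real.exp_le_exp.2 (hz i hi))
      (by linarith [hri i hi])
  have e1 : ∑ i ∈ Sstar, (r i - c) * Real.exp (u i)
      = A - c * ∑ j ∈ Sstar, Real.exp (u j) := by
    rw [hA, Finset.mul_sum, ← Finset.sum_sub_distrib]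
    exact Finset.sum_congr rfl fun i _ => by ring
  have e2 : ∑ i ∈ Sstar, (r i - c) * Real.exp (z i)
      = (∑ i ∈ Sstar, r i * Real.exp (z i))
        - c * ∑ j ∈ Sstar, Real.exp (z j) := by
    rw [Finset.mul_sum, ← Finset.sum_sub_distrib]
    exact Finset.sum_congr rfl fun i _ => by ring
  rw [e1, e2] at hkey
  have : A - c * ∑ j ∈ Sstar, Real.exp (u j) = c := by
    rw [hB] at hcB; linarith [hcB]
  linarith
end

section
/- Let S be a finite set of items with revenues r_i satisfying |r_i| ≤ 1, and let u, u' : S → ℝ satisfy u_i ≥ u'_i for all i ∈ S. With R(S, u) = (∑_{i∈S} r_i exp(u_i)) / (1 + ∑_{j∈S} exp(u_j)), we have R(S, u) − R(S, u') ≤ max_{i∈S} (u_i − u'_i). -/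
open Finset

lemma aux1 (x : ℝ) : 0 ≤ 1 + (x - 1) * Real.exp x := by
  rcases le_or_gt 1 x with h | h
  · have := Real.exp_pos x
    nlinarith
  · have h1 : 1 - x ≤ Real.exp (-x) := by linarith [Real.add_one_le_exp (-x)]
    have h2 : (1 - x) * Real.exp x ≤ Real.exp (-x) * Real.exp x :=
      mul_le_mul_of_nonneg_right h1 (Real.exp_pos x).le
    rw [← Real.exp_add] at h2
    simp at h2
    nlinarith

lemma key (t : ℝ) (ht : 0 ≤ t) : 2 * (Real.exp t - 1) ≤ t * (Real.exp t + 1) := by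
  have hmono : MonotoneOn (fun x => x * (Real.exp x + 1) - 2 * Real.exp x) (Set.Ici 0) := by
    apply monotoneOn_of_deriv_nonneg (convex_Ici 0)
    · fun_prop
    · fun_prop
    · intro x hx
      have hd : HasDerivAt (fun x => x * (Real.exp x + 1) - 2 * Real.exp x)
          (1 * (Real.exp x + 1) + x * Real.exp x - 2 * Real.exp x) x := by
        exact ((hasDerivAt_id x).mul ((Real.hasDerivAt_exp x).add_const 1)).sub
          ((Real.hasDerivAt_exp x).const_mul 2)
      rw [hd.deriv]
      have := aux1 x
      nlinarith
  have h0 : (0:ℝ) ∈ Set.Ici (0:ℝ) := Set.self_mem_Ici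
  have ht' : t ∈ Set.Ici (0:ℝ) := ht
  have := hmono h0 ht' ht
  simp [Real.exp_zero] at this
  linarith

lemma exp_diff_abs (a b : ℝ) :
    |Real.exp a - Real.exp b| ≤ |a - b| * (Real.exp a + Real.exp b) / 2 := by
  wlog h : b ≤ a generalizing a b
  · have := this b a (by linarith)
    rw [abs_sub_comm, abs_sub_comm b a] at this
    linarith
  have hk := key (a - b) (by linarith)
  have hb := Real.exp_pos b
  have hab : Real.exp a = Real.exp b * Real.exp (a - b) := by
    rw [← Real.exp_add]; ring_nf
  have hnn : Real.exp b ≤ Real.exp a := Real.exp_le_exp.2 h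
  rw [abs_of_nonneg (by linarith), abs_of_nonneg (by linarith : (0:ℝ) ≤ a - b)]
  nlinarith [Real.exp_pos (a - b)]

/-- Lipschitz property of the MNL expected revenue: if `u ≥ u'` pointwise on `S` and
`|r_i| ≤ 1`, then `R(S,u) − R(S,u') ≤ max_{i∈S} (u_i − u'_i)`. -/
theorem stmt9 {ι : Type*} (S : Finset ι) (hS : S.Nonempty) (r u u' : ι → ℝ)
    (hr : ∀ i ∈ S, |r i| ≤ 1) (hu : ∀ i ∈ S, u' i ≤ u i) :
    (∑ i ∈ S, r i * Real.exp (u i)) / (1 + ∑ j ∈ S, Real.exp (u j))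
        - (∑ i ∈ S, r i * Real.exp (u' i)) / (1 + ∑ j ∈ S, Real.exp (u' j))
      ≤ S.sup' hS fun i => u i - u' i := by
  set M := S.sup' hS fun i => u i - u' i with hMdef
  have hd : ∀ i ∈ S, u i - u' i ≤ M := fun i hi => Finset.le_sup' (fun i => u i - u' i) hi
  have hM0 : 0 ≤ M := by
    obtain ⟨i, hi⟩ := hS
    exact le_trans (by linarith [hu i hi]) (hd i hi)
  set A := ∑ i ∈ S, r i * Real.exp (u i) with hA
  set A' := ∑ i ∈ S, r i * Real.exp (u' i) with hA'
  set X := ∑ j ∈ S, Real.exp (u j) with hX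
  set Y := ∑ j ∈ S, Real.exp (u' j) with hY
  have hX0 : 0 ≤ X := Finset.sum_nonneg fun i _ => (Real.exp_pos _).le
  have hY0 : 0 ≤ Y := Finset.sum_nonneg fun i _ => (Real.exp_pos _).le
  have hB : (0:ℝ) < 1 + X := by linarith
  have hB' : (0:ℝ) < 1 + Y := by linarith
  rw [div_sub_div _ _ (ne_of_gt hB) (ne_of_gt hB'), div_le_iff₀ (by positivity)]
  -- expand
  have expand : A * (1 + Y) - (1 + X) * A'
      = (∑ i ∈ S, r i * (Real.exp (u i) - Real.exp (u' i)))
        + ∑ i ∈ S, ∑ j ∈ S, r i * (Real.exp (u i) * Real.exp (u' j)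
            - Real.exp (u' i) * Real.exp (u j)) := by
    have e1 : ∀ i, ∑ j ∈ S, r i * (Real.exp (u i) * Real.exp (u' j)
        - Real.exp (u' i) * Real.exp (u j))
        = r i * Real.exp (u i) * Y - r i * Real.exp (u' i) * X := by
      intro i
      rw [hX, hY, Finset.mul_sum, Finset.mul_sum, ← Finset.sum_sub_distrib]
      exact Finset.sum_congr rfl fun j _ => by ring
    rw [Finset.sum_congr rfl fun i _ => e1 i]
    rw [Finset.sum_sub_distrib, ← Finset.sum_mul, ← Finset.sum_mul, ← hA, ← hA']
    rw [Finset.sum_congr rfl fun i _ => (mul_sub (r i) _ _ : r i * (Real.exp (u i) - Real.exp (u' i)) = _)]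
    rw [Finset.sum_sub_distrib, ← hA, ← hA']
    ring
  rw [expand]
  -- bound term 1
  have t1 : (∑ i ∈ S, r i * (Real.exp (u i) - Real.exp (u' i)))
      ≤ M / 2 * (X + Y) := by
    have : ∀ i ∈ S, r i * (Real.exp (u i) - Real.exp (u' i))
        ≤ M * (Real.exp (u i) + Real.exp (u' i)) / 2 := by
      intro i hi
      have habs := exp_diff_abs (u i) (u' i)
      have h1 : |u i - u' i| = u i - u' i := abs_of_nonneg (by linarith [hu i hi])
      rw [h1] at habs
      have h2 : r i * (Real.exp (u i) - Real.exp (u' i))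
          ≤ |Real.exp (u i) - Real.exp (u' i)| := by
        calc r i * (Real.exp (u i) - Real.exp (u' i))
            ≤ |r i * (Real.exp (u i) - Real.exp (u' i))| := le_abs_self _
          _ = |r i| * |Real.exp (u i) - Real.exp (u' i)| := abs_mul _ _
          _ ≤ 1 * |Real.exp (u i) - Real.exp (u' i)| := by
              gcongr; exact hr i hi
          _ = _ := one_mul _
      have h3 : (u i - u' i) * (Real.exp (u i) + Real.exp (u' i)) / 2
          ≤ M * (Real.exp (u i) + Real.exp (u' i)) / 2 := by
        have := mul_le_mul_of_nonneg_right (hd i hi)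
          (by positivity : (0:ℝ) ≤ Real.exp (u i) + Real.exp (u' i))
        linarith
      linarith
    calc (∑ i ∈ S, r i * (Real.exp (u i) - Real.exp (u' i)))
        ≤ ∑ i ∈ S, M * (Real.exp (u i) + Real.exp (u' i)) / 2 :=
          Finset.sum_le_sum this
      _ = M / 2 * (X + Y) := by
          rw [hX, hY, ← Finset.sum_add_distrib, Finset.mul_sum]
          exact Finset.sum_congr rfl fun i _ => by ring
  -- bound term 2
  have t2 : (∑ i ∈ S, ∑ j ∈ S, r i * (Real.exp (u i) * Real.exp (u' j)
        - Real.exp (u' i) * Real.exp (u j))) ≤ M * (X * Y) := by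
    have hterm : ∀ i ∈ S, ∀ j ∈ S, r i * (Real.exp (u i) * Real.exp (u' j)
        - Real.exp (u' i) * Real.exp (u j))
        ≤ M * (Real.exp (u i) * Real.exp (u' j) + Real.exp (u' i) * Real.exp (u j)) / 2 := by
      intro i hi j hj
      have habs := exp_diff_abs (u i + u' j) (u' i + u j)
      have hdij : |u i + u' j - (u' i + u j)| ≤ M := by
        rw [abs_le]
        constructor
        · linarith [hd j hj, hu i hi]
        · linarith [hd i hi, hu j hj]
      rw [Real.exp_add, Real.exp_add] at habs
      have h2 : r i * (Real.exp (u i) * Real.exp (u' j) - Real.exp (u' i) * Real.exp (u j))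
          ≤ |Real.exp (u i) * Real.exp (u' j) - Real.exp (u' i) * Real.exp (u j)| := by
        calc _ ≤ |r i * (Real.exp (u i) * Real.exp (u' j) - Real.exp (u' i) * Real.exp (u j))| :=
              le_abs_self _
          _ = |r i| * _ := abs_mul _ _
          _ ≤ 1 * _ := by gcongr; exact hr i hi
          _ = _ := one_mul _
      have h3 : |u i + u' j - (u' i + u j)| * (Real.exp (u i) * Real.exp (u' j)
            + Real.exp (u' i) * Real.exp (u j)) / 2
          ≤ M * (Real.exp (u i) * Real.exp (u' j) + Real.exp (u' i) * Real.exp (u j)) / 2 := by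
        have := mul_le_mul_of_nonneg_right hdij
          (by positivity : (0:ℝ) ≤ Real.exp (u i) * Real.exp (u' j) + Real.exp (u' i) * Real.exp (u j))
        linarith
      linarith
    have hsum : (∑ i ∈ S, ∑ j ∈ S, M * (Real.exp (u i) * Real.exp (u' j)
          + Real.exp (u' i) * Real.exp (u j)) / 2) = M * (X * Y) := by
      have swap : (∑ i ∈ S, ∑ j ∈ S, Real.exp (u' i) * Real.exp (u j))
          = ∑ i ∈ S, ∑ j ∈ S, Real.exp (u i) * Real.exp (u' j) := by
        rw [Finset.sum_comm]
        exact Finset.sum_congr rfl fun i _ => Finset.sum_congr rfl fun j _ => mul_comm _ _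
      have dsum : (∑ i ∈ S, ∑ j ∈ S, Real.exp (u i) * Real.exp (u' j)) = X * Y := by
        rw [hX, hY, Finset.sum_mul_sum]
      calc (∑ i ∈ S, ∑ j ∈ S, M * (Real.exp (u i) * Real.exp (u' j)
            + Real.exp (u' i) * Real.exp (u j)) / 2)
          = ∑ i ∈ S, ∑ j ∈ S, (M / 2 * (Real.exp (u i) * Real.exp (u' j))
            + M / 2 * (Real.exp (u' i) * Real.exp (u j))) :=
            Finset.sum_congr rfl fun i _ => Finset.sum_congr rfl fun j _ => by ring
        _ = M / 2 * (∑ i ∈ S, ∑ j ∈ S, Real.exp (u i) * Real.exp (u' j))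
            + M / 2 * (∑ i ∈ S, ∑ j ∈ S, Real.exp (u' i) * Real.exp (u j)) := by
            simp only [Finset.sum_add_distrib, ← Finset.mul_sum]
        _ = M * (X * Y) := by rw [swap, dsum]; ring
    calc _ ≤ ∑ i ∈ S, ∑ j ∈ S, M * (Real.exp (u i) * Real.exp (u' j)
          + Real.exp (u' i) * Real.exp (u j)) / 2 :=
        Finset.sum_le_sum fun i hi => Finset.sum_le_sum fun j hj => hterm i hi j hj
      _ = M * (X * Y) := hsum
  nlinarith [mul_nonneg hM0 hX0, mul_nonneg hM0 hY0, mul_nonneg (mul_nonneg hM0 hX0) hY0]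
end

section
/- Let x_1, …, x_m ∈ ℝ^d, let y_1, …, y_m ∈ {0,1} with ∑_{i=1}^m y_i ≤ 1, and define the per-round MNL loss f(θ) = −∑_{i=1}^m y_i x_iᵀθ + log(1 + ∑_{j=1}^m exp(x_jᵀθ)) and its gradient G(θ) = ∑_{i=1}^m (p_i(θ) − y_i) x_i. Suppose κ > 0 is such that p_i(θ) p_0(θ) ≥ κ for every i = 1,…,m and every θ on the line segment between θ₁ and θ₂. Then f(θ₂) ≥ f(θ₁) + G(θ₁)ᵀ(θ₂ − θ₁) + (κ/2) (θ₂ − θ₁)ᵀ (∑_{i=1}^m x_i x_iᵀ) (θ₂ − θ₁). -/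
open Matrix

/-!
Restrict the loss to the segment, `g t = f (θ₁ + t v)` with `v = θ₂ - θ₁`. Then
`g' t = G(θ₁ + t v)ᵀ v` and `g'' t` is the variance of `i ↦ aᵢ = xᵢᵀv` under the MNL choice
distribution, the outside option scoring `0`. By Cauchy–Schwarz,
`(∑ pᵢ aᵢ)² ≤ (∑ pᵢ) ∑ pᵢ aᵢ² = (1 - p₀) ∑ pᵢ aᵢ²`, so this variance is at least
`∑ pᵢ p₀ aᵢ² ≥ κ ∑ aᵢ²`, and a second derivative bounded below by `c` on `[0, 1]` gives
`g 1 ≥ g 0 + g' 0 + c / 2` (the function `g t - c t² / 2` is convex).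
-/

/-- MNL choice probability of item `i`. -/
noncomputable def mnlProb {d m : ℕ} (x : Fin m → Fin d → ℝ) (θ : Fin d → ℝ)
    (i : Fin m) : ℝ :=
  Real.exp (x i ⬝ᵥ θ) / (1 + ∑ j, Real.exp (x j ⬝ᵥ θ))

/-- MNL outside-option probability. -/
noncomputable def mnlProb0 {d m : ℕ} (x : Fin m → Fin d → ℝ) (θ : Fin d → ℝ) : ℝ :=
  1 / (1 + ∑ j, Real.exp (x j ⬝ᵥ θ))

/-- Per-round MNL negative log-likelihood. -/
noncomputable def mnlLoss {d m : ℕ} (x : Fin m → Fin d → ℝ) (y : Fin m → ℝ)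
    (θ : Fin d → ℝ) : ℝ :=
  -∑ i, y i * (x i ⬝ᵥ θ) + Real.log (1 + ∑ j, Real.exp (x j ⬝ᵥ θ))

/-- Gradient of the per-round MNL loss. -/
noncomputable def mnlGrad {d m : ℕ} (x : Fin m → Fin d → ℝ) (y : Fin m → ℝ)
    (θ : Fin d → ℝ) : Fin d → ℝ :=
  ∑ i, (mnlProb x θ i - y i) • x i

lemma quadratic_lower_bound_of_le_deriv2 {f f' f'' : ℝ → ℝ} {a b c : ℝ} (hab : a ≤ b)
    (hf : ∀ t, HasDerivAt f (f' t) t) (hf' : ∀ t, HasDerivAt f' (f'' t) t)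
    (hc : ∀ t ∈ Set.Icc a b, c ≤ f'' t) :
    f a + f' a * (b - a) + c / 2 * (b - a) ^ 2 ≤ f b := by
  rcases hab.eq_or_lt with rfl | hlt
  · simp
  have hconv : ConvexOn ℝ (Set.Icc a b) (fun t => f t - c / 2 * t ^ 2) := by
    refine convexOn_of_hasDerivWithinAt2_nonneg (convex_Icc a b) (f' := fun t => f' t - c * t)
      (f'' := fun t => f'' t - c) ?_ (fun t _ => ?_) (fun t _ => ?_) (fun t ht => ?_)
    · exact fun t _ => ((hf t).continuousAt.sub (by fun_prop)).continuousWithinAt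
    · exact ((hf t).sub ((hasDerivAt_pow 2 t).const_mul (c / 2))
        |>.congr_deriv (by push_cast; ring)).hasDerivWithinAt
    · exact ((hf' t).sub ((hasDerivAt_id t).const_mul c)
        |>.congr_deriv (by simp)).hasDerivWithinAt
    · exact sub_nonneg.2 (hc t (interior_subset ht))
  have hslope := hconv.le_slope_of_hasDerivAt (Set.left_mem_Icc.2 hab) (Set.right_mem_Icc.2 hab) hlt
    ((hf a).sub ((hasDerivAt_pow 2 a).const_mul (c / 2)))
  rw [slope_def_field, le_div_iff₀ (sub_pos.2 hlt)] at hslope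
  push_cast at hslope
  nlinarith

lemma dotProduct_sum_vecMulVec_mulVec {R ι n : Type*} [CommRing R] [Fintype ι] [Fintype n]
    (x : ι → n → R) (v : n → R) :
    v ⬝ᵥ (∑ i, vecMulVec (x i) (x i)) *ᵥ v = ∑ i, (x i ⬝ᵥ v) ^ 2 := by
  simp only [sum_mulVec, vecMulVec_mulVec, op_smul_eq_smul, dotProduct_comm v, sum_dotProduct,
    smul_dotProduct, smul_eq_mul, sq]

lemma hasDerivAt_dotProduct_add_smul {n : Type*} [Fintype n] (w θ v : n → ℝ) (t : ℝ) :
    HasDerivAt (fun t : ℝ => w ⬝ᵥ (θ + t • v)) (w ⬝ᵥ v) t := by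
  simp only [dotProduct_add, dotProduct_smul, smul_eq_mul]
  simpa using ((hasDerivAt_id t).mul_const (w ⬝ᵥ v)).const_add (w ⬝ᵥ θ)

section

variable {d m : ℕ} (x : Fin m → Fin d → ℝ)

lemma one_add_sum_exp_pos (θ : Fin d → ℝ) : 0 < 1 + ∑ j, Real.exp (x j ⬝ᵥ θ) := by
  positivity

lemma hasDerivAt_one_add_sum_exp (θ v : Fin d → ℝ) (t : ℝ) :
    HasDerivAt (fun t : ℝ => 1 + ∑ j, Real.exp (x j ⬝ᵥ (θ + t • v)))
      (∑ j, Real.exp (x j ⬝ᵥ (θ + t • v)) * (x j ⬝ᵥ v)) t :=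
  (HasDerivAt.fun_sum fun j _ => (hasDerivAt_dotProduct_add_smul (x j) θ v t).exp).const_add 1

lemma sum_mnlProb_add_mnlProb0 (θ : Fin d → ℝ) : ∑ i, mnlProb x θ i + mnlProb0 x θ = 1 := by
  have := (one_add_sum_exp_pos x θ).ne'
  simp only [mnlProb, mnlProb0, ← Finset.sum_div]
  field_simp
  ring

lemma sum_mnlProb_mul (θ : Fin d → ℝ) (a : Fin m → ℝ) :
    ∑ i, mnlProb x θ i * a i
      = (∑ i, Real.exp (x i ⬝ᵥ θ) * a i) / (1 + ∑ j, Real.exp (x j ⬝ᵥ θ)) := by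
  simp only [mnlProb, Finset.sum_div, div_mul_eq_mul_div]

lemma hasDerivAt_mnlProb (θ v : Fin d → ℝ) (i : Fin m) (t : ℝ) :
    HasDerivAt (fun t : ℝ => mnlProb x (θ + t • v) i)
      (mnlProb x (θ + t • v) i * (x i ⬝ᵥ v - ∑ j, mnlProb x (θ + t • v) j * (x j ⬝ᵥ v))) t := by
  refine ((hasDerivAt_dotProduct_add_smul (x i) θ v t).exp.div
    (hasDerivAt_one_add_sum_exp x θ v t) (one_add_sum_exp_pos x _).ne').congr_deriv ?_
  have := (one_add_sum_exp_pos x (θ + t • v)).ne'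
  rw [sum_mnlProb_mul, mnlProb]
  field_simp

lemma mnlGrad_dotProduct (y : Fin m → ℝ) (θ v : Fin d → ℝ) :
    mnlGrad x y θ ⬝ᵥ v = ∑ i, (mnlProb x θ i - y i) * (x i ⬝ᵥ v) := by
  simp only [mnlGrad, sum_dotProduct, smul_dotProduct, smul_eq_mul]

lemma hasDerivAt_mnlLoss (y : Fin m → ℝ) (θ v : Fin d → ℝ) (t : ℝ) :
    HasDerivAt (fun t : ℝ => mnlLoss x y (θ + t • v)) (mnlGrad x y (θ + t • v) ⬝ᵥ v) t := by
  have hlin := HasDerivAt.fun_sum (u := Finset.univ) fun i _ =>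
    (hasDerivAt_dotProduct_add_smul (x i) θ v t).const_mul (y i)
  refine (hlin.neg.add ((hasDerivAt_one_add_sum_exp x θ v t).log
    (one_add_sum_exp_pos x _).ne')).congr_deriv ?_
  rw [mnlGrad_dotProduct, ← sum_mnlProb_mul]
  simp only [sub_mul, Finset.sum_sub_distrib]
  ring

/-- `vᵀ ∇²f(θ) v`: the variance of `i ↦ xᵢᵀv` under the MNL distribution, the outside option
scoring `0`. -/
noncomputable def mnlHessianForm (θ v : Fin d → ℝ) : ℝ :=
  ∑ i, mnlProb x θ i * (x i ⬝ᵥ v) ^ 2 - (∑ i, mnlProb x θ i * (x i ⬝ᵥ v)) ^ 2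

lemma hasDerivAt_mnlGrad_dotProduct (y : Fin m → ℝ) (θ v : Fin d → ℝ) (t : ℝ) :
    HasDerivAt (fun t : ℝ => mnlGrad x y (θ + t • v) ⬝ᵥ v) (mnlHessianForm x (θ + t • v) v) t := by
  simp only [mnlGrad_dotProduct]
  refine (HasDerivAt.fun_sum fun i _ =>
    ((hasDerivAt_mnlProb x θ v i t).sub_const (y i)).mul_const (x i ⬝ᵥ v)).congr_deriv ?_
  rw [mnlHessianForm, sq (∑ i, _), Finset.sum_mul, ← Finset.sum_sub_distrib]
  exact Finset.sum_congr rfl fun i _ => by ring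

lemma mnlProb_nonneg (θ : Fin d → ℝ) (i : Fin m) : 0 ≤ mnlProb x θ i := by
  unfold mnlProb
  positivity

lemma sum_mnlProb_mul_mnlProb0_mul_sq_le_mnlHessianForm (θ v : Fin d → ℝ) :
    ∑ i, mnlProb x θ i * mnlProb0 x θ * (x i ⬝ᵥ v) ^ 2 ≤ mnlHessianForm x θ v := by
  have hCS : (∑ i, mnlProb x θ i * (x i ⬝ᵥ v)) ^ 2
      ≤ (∑ i, mnlProb x θ i) * ∑ i, mnlProb x θ i * (x i ⬝ᵥ v) ^ 2 :=
    Finset.sum_sq_le_sum_mul_sum_of_sq_le_mul _ (fun i _ => mnlProb_nonneg x θ i)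
      (fun i _ => mul_nonneg (mnlProb_nonneg x θ i) (sq_nonneg _)) (fun i _ => le_of_eq (by ring))
  have hsum : ∑ i, mnlProb x θ i = 1 - mnlProb0 x θ := by
    linarith [sum_mnlProb_add_mnlProb0 x θ]
  have hfactor : ∑ i, mnlProb x θ i * mnlProb0 x θ * (x i ⬝ᵥ v) ^ 2
      = mnlProb0 x θ * ∑ i, mnlProb x θ i * (x i ⬝ᵥ v) ^ 2 := by
    rw [Finset.mul_sum]
    exact Finset.sum_congr rfl fun i _ => by ring
  rw [hsum] at hCS
  rw [hfactor, mnlHessianForm]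
  linarith

end

theorem stmt10_general {d m : ℕ} (x : Fin m → Fin d → ℝ) (y : Fin m → ℝ)
    (κ : ℝ) (θ₁ θ₂ : Fin d → ℝ)
    (hseg : ∀ θ ∈ segment ℝ θ₁ θ₂, ∀ i, κ ≤ mnlProb x θ i * mnlProb0 x θ) :
    mnlLoss x y θ₁ + mnlGrad x y θ₁ ⬝ᵥ (θ₂ - θ₁)
        + κ / 2 * ((θ₂ - θ₁) ⬝ᵥ (∑ i, vecMulVec (x i) (x i)) *ᵥ (θ₂ - θ₁))
      ≤ mnlLoss x y θ₂ := by
  set v := θ₂ - θ₁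
  have hcurv : ∀ t ∈ Set.Icc (0 : ℝ) 1,
      κ * ∑ i, (x i ⬝ᵥ v) ^ 2 ≤ mnlHessianForm x (θ₁ + t • v) v := by
    intro t ht
    have hmem : θ₁ + t • v ∈ segment ℝ θ₁ θ₂ := by
      rw [segment_eq_image']
      exact ⟨t, ht, rfl⟩
    refine le_trans ?_ (sum_mnlProb_mul_mnlProb0_mul_sq_le_mnlHessianForm x _ v)
    rw [Finset.mul_sum]
    exact Finset.sum_le_sum fun i _ => mul_le_mul_of_nonneg_right (hseg _ hmem i) (sq_nonneg _)
  have htaylor := quadratic_lower_bound_of_le_deriv2 zero_le_one (hasDerivAt_mnlLoss x y θ₁ v)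
    (hasDerivAt_mnlGrad_dotProduct x y θ₁ v) hcurv
  simp only [zero_smul, add_zero, one_smul, sub_zero, mul_one, one_pow] at htaylor
  rw [show θ₁ + v = θ₂ from add_sub_cancel θ₁ θ₂] at htaylor
  rw [dotProduct_sum_vecMulVec_mulVec]
  linarith

/-- Strong-convexity (second-order Taylor) lower bound for the per-round MNL loss:
`f(θ₂) ≥ f(θ₁) + G(θ₁)ᵀ(θ₂−θ₁) + (κ/2)(θ₂−θ₁)ᵀ(∑ᵢ xᵢxᵢᵀ)(θ₂−θ₁)`
when `pᵢ(θ)p₀(θ) ≥ κ` on the segment between `θ₁` and `θ₂`. -/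
theorem stmt10 {d m : ℕ} (x : Fin m → Fin d → ℝ) (y : Fin m → ℝ)
    (hy : ∀ i, y i = 0 ∨ y i = 1) (hy1 : ∑ i, y i ≤ 1)
    (κ : ℝ) (hκ : 0 < κ) (θ₁ θ₂ : Fin d → ℝ)
    (hseg : ∀ θ ∈ segment ℝ θ₁ θ₂, ∀ i, κ ≤ mnlProb x θ i * mnlProb0 x θ) :
    mnlLoss x y θ₁ + mnlGrad x y θ₁ ⬝ᵥ (θ₂ - θ₁)
        + κ / 2 * ((θ₂ - θ₁) ⬝ᵥ (∑ i, vecMulVec (x i) (x i)) *ᵥ (θ₂ - θ₁))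
      ≤ mnlLoss x y θ₂ :=
  stmt10_general x y κ θ₁ θ₂ hseg
end

section
/- Let N, k, k' be integers with 1 ≤ k' ≤ k ≤ N − k' + 1, and let t ∈ [0,1]. Then t^{k−1}(1−t)^{N−k} ≤ t^{k'−1}(1−t)^{N−k'} + t^{N−k'}(1−t)^{k'−1}. -/
/-- Boundary-dominance inequality: for `1 ≤ k' ≤ k ≤ N − k' + 1` and `t ∈ [0,1]`,
`t^(k−1)(1−t)^(N−k) ≤ t^(k'−1)(1−t)^(N−k') + t^(N−k')(1−t)^(k'−1)`. -/
theorem stmt14 {N k k' : ℕ} (hk' : 1 ≤ k') (hk'k : k' ≤ k) (hkN : k + k' ≤ N + 1)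
    (t : ℝ) (ht : t ∈ Set.Icc (0 : ℝ) 1) :
    t ^ (k - 1) * (1 - t) ^ (N - k)
      ≤ t ^ (k' - 1) * (1 - t) ^ (N - k') + t ^ (N - k') * (1 - t) ^ (k' - 1) := by
  obtain ⟨ht0, ht1⟩ := ht
  have h1t : (0:ℝ) ≤ 1 - t := by linarith
  rcases le_total t (1 - t) with h | h
  · have h1 : k - 1 = (k' - 1) + (k - k') := by omega
    have h2 : N - k' = (k - k') + (N - k) := by omega
    have key : t ^ (k - 1) * (1 - t) ^ (N - k) ≤ t ^ (k' - 1) * (1 - t) ^ (N - k') := by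
      rw [h1, h2, pow_add, pow_add, mul_assoc]
      refine mul_le_mul_of_nonneg_left ?_ (pow_nonneg ht0 _)
      exact mul_le_mul_of_nonneg_right (pow_le_pow_left₀ ht0 h _) (pow_nonneg h1t _)
    have : 0 ≤ t ^ (N - k') * (1 - t) ^ (k' - 1) :=
      mul_nonneg (pow_nonneg ht0 _) (pow_nonneg h1t _)
    linarith
  · have h1 : N - k = (k' - 1) + (N - k - (k' - 1)) := by omega
    have h2 : N - k' = (k - 1) + (N - k - (k' - 1)) := by omega
    have key : t ^ (k - 1) * (1 - t) ^ (N - k) ≤ t ^ (N - k') * (1 - t) ^ (k' - 1) := by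
      rw [h1, h2, pow_add, pow_add]
      have := pow_le_pow_left₀ h1t h (N - k - (k' - 1))
      calc t ^ (k - 1) * ((1 - t) ^ (k' - 1) * (1 - t) ^ (N - k - (k' - 1)))
          ≤ t ^ (k - 1) * ((1 - t) ^ (k' - 1) * t ^ (N - k - (k' - 1))) := by
            refine mul_le_mul_of_nonneg_left ?_ (pow_nonneg ht0 _)
            exact mul_le_mul_of_nonneg_left this (pow_nonneg h1t _)
        _ = t ^ (k - 1) * t ^ (N - k - (k' - 1)) * (1 - t) ^ (k' - 1) := by ring
    have : 0 ≤ t ^ (k' - 1) * (1 - t) ^ (N - k') :=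
      mul_nonneg (pow_nonneg ht0 _) (pow_nonneg h1t _)
    linarith
end

section
/- For rounds t = 1, …, n, let S_t be a finite index set and x_{t,i} ∈ ℝ^d for i ∈ S_t, and let p_{t,i}(θ) denote the MNL choice probabilities on round t determined by {x_{t,j}}_{j∈S_t} (with outside-option probability p_{t,0}(θ)). Define J(θ) = ∑_{t=1}^n ∑_{i∈S_t} ( p_{t,i}(θ) − p_{t,i}(θ*) ) x_{t,i} and V = ∑_{t=1}^n ∑_{i∈S_t} x_{t,i} x_{t,i}ᵀ, and assume V is positive definite. Let η > 0 and κ_η > 0 be such that p_{t,i}(θ) p_{t,0}(θ) ≥ κ_η for every t, every i ∈ S_t, and every θ with ‖θ − θ*‖ ≤ η. Then for every θ with ‖θ − θ*‖ ≤ η, ‖J(θ)‖²_{V⁻¹} ≥ κ_η² λ_min(V) ‖θ − θ*‖₂². -/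
/-!
Write `u = θ - θ*` and move along the segment `θ* + s u`, `s ∈ [0, 1]`. On each round the
derivative of `s ↦ ∑ᵢ pᵢ xᵢᵀu` is the variance of `xᵢᵀu` under the choice distribution (the outside
option carrying the value `0`), and `pᵢ p₀ ≥ κ` bounds that variance below by `κ ∑ᵢ (xᵢᵀu)²`.
Summing over rounds and integrating gives `J(θ)ᵀu ≥ κ ‖u‖²_V`; Cauchy–Schwarz in the geometry of
`V`, `(J(θ)ᵀu)² ≤ ‖J(θ)‖²_{V⁻¹} ‖u‖²_V`, then gives `‖J(θ)‖²_{V⁻¹} ≥ κ² ‖u‖²_V ≥ κ² λ_min(V) ‖u‖²`.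
-/

open Matrix

/-- The minimum eigenvalue of a Hermitian real matrix. -/
noncomputable def lambdaMin {d : ℕ} (A : Matrix (Fin d) (Fin d) ℝ)
    (hA : A.IsHermitian) : ℝ :=
  ⨅ i, hA.eigenvalues i

/-- MNL choice probability of item `i` in an assortment `S`. -/
noncomputable def mnlPS {d : ℕ} {ι : Type*} (S : Finset ι) (x : ι → Fin d → ℝ)
    (θ : Fin d → ℝ) (i : ι) : ℝ :=
  Real.exp (x i ⬝ᵥ θ) / (1 + ∑ j ∈ S, Real.exp (x j ⬝ᵥ θ))

/-- MNL outside-option probability for an assortment `S`. -/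
noncomputable def mnlPS0 {d : ℕ} {ι : Type*} (S : Finset ι) (x : ι → Fin d → ℝ)
    (θ : Fin d → ℝ) : ℝ :=
  1 / (1 + ∑ j ∈ S, Real.exp (x j ⬝ᵥ θ))

open scoped MatrixOrder in
theorem Matrix.IsHermitian.iInf_eigenvalues_mul_dotProduct_le {n : Type*} [Fintype n]
    [DecidableEq n] {A : Matrix n n ℝ} (hA : A.IsHermitian) (u : n → ℝ) :
    (⨅ i, hA.eigenvalues i) * (u ⬝ᵥ u) ≤ u ⬝ᵥ A *ᵥ u := by
  have hle : algebraMap ℝ (Matrix n n ℝ) (⨅ i, hA.eigenvalues i) ≤ A := by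
    refine algebraMap_le_of_le_spectrum (fun r hr => ?_) hA.isSelfAdjoint
    obtain ⟨i, rfl⟩ := hA.spectrum_real_eq_range_eigenvalues ▸ hr
    exact ciInf_le (Set.finite_range _).bddBelow i
  simpa [sub_mulVec, Algebra.algebraMap_eq_smul_one, smul_mulVec] using
    (Matrix.le_iff.mp hle).dotProduct_mulVec_nonneg u

theorem Matrix.PosDef.sq_dotProduct_le_mul {n : Type*} [Fintype n] [DecidableEq n]
    {V : Matrix n n ℝ} (hV : V.PosDef) (b u : n → ℝ) :
    (b ⬝ᵥ u) ^ 2 ≤ (b ⬝ᵥ V⁻¹ *ᵥ b) * (u ⬝ᵥ V *ᵥ u) := by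
  set w := V⁻¹ *ᵥ b
  have hVw : V *ᵥ w = b := by
    rw [mulVec_mulVec, mul_nonsing_inv _ (isUnit_iff_ne_zero.mpr hV.det_pos.ne'), one_mulVec]
  have hwV : w ᵥ* V = b := by
    rw [← hVw, ← vecMul_transpose, ← conjTranspose_eq_transpose_of_trivial, hV.isHermitian.eq]
  have hCS := (toBilin' V).apply_mul_apply_le_of_forall_zero_le
    (fun v => by simpa [toBilin'_apply'] using hV.posSemidef.dotProduct_mulVec_nonneg v) w u
  simp only [toBilin'_apply', dotProduct_mulVec w, hwV, hVw] at hCS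
  rwa [dotProduct_comm u b, ← sq, dotProduct_comm w b] at hCS

theorem sqrt_sum_sq_add_smul_sub_le {n : Type*} [Fintype n] (a b : n → ℝ) {s : ℝ}
    (hs : s ∈ Set.Icc (0 : ℝ) 1) :
    Real.sqrt (∑ j, ((a + s • b) j - a j) ^ 2) ≤ Real.sqrt (∑ j, b j ^ 2) := by
  refine Real.sqrt_le_sqrt ?_
  calc ∑ j, ((a + s • b) j - a j) ^ 2 = s ^ 2 * ∑ j, b j ^ 2 := by
        simp [Finset.mul_sum, mul_pow]
    _ ≤ ∑ j, b j ^ 2 :=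
        mul_le_of_le_one_left (Finset.sum_nonneg fun j _ => sq_nonneg _) (pow_le_one₀ hs.1 hs.2)

theorem dotProduct_vecMulVec_self_mulVec {n : Type*} [Fintype n] (w u : n → ℝ) :
    u ⬝ᵥ vecMulVec w w *ᵥ u = (w ⬝ᵥ u) ^ 2 := by
  simp [vecMulVec_mulVec, dotProduct_comm u w, sq]

theorem mul_sum_sq_le_sum_mul_sq_sub_sq {ι : Type*} {s : Finset ι} {p a : ι → ℝ} {p₀ κ : ℝ}
    (hp : ∀ i ∈ s, 0 ≤ p i) (hsum : p₀ + ∑ i ∈ s, p i = 1) (hκ : ∀ i ∈ s, κ ≤ p i * p₀) :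
    κ * ∑ i ∈ s, a i ^ 2 ≤ ∑ i ∈ s, p i * a i ^ 2 - (∑ i ∈ s, p i * a i) ^ 2 := by
  have hCS : (∑ i ∈ s, p i * a i) ^ 2 ≤ (∑ i ∈ s, p i) * ∑ i ∈ s, p i * a i ^ 2 :=
    Finset.sum_sq_le_sum_mul_sum_of_sq_le_mul s hp
      (fun i hi => mul_nonneg (hp i hi) (sq_nonneg _)) fun i _ => le_of_eq (by ring)
  have hκ' : κ * ∑ i ∈ s, a i ^ 2 ≤ p₀ * ∑ i ∈ s, p i * a i ^ 2 := by
    rw [Finset.mul_sum, Finset.mul_sum]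
    exact Finset.sum_le_sum fun i hi => by nlinarith [hκ i hi, sq_nonneg (a i)]
  rw [show ∑ i ∈ s, p i = 1 - p₀ by linarith] at hCS
  linarith

section MNL

variable {d : ℕ} {ι : Type*} (S : Finset ι) (x : ι → Fin d → ℝ)

theorem mnlPS_nonneg (θ : Fin d → ℝ) (i : ι) : 0 ≤ mnlPS S x θ i := by
  unfold mnlPS; positivity

theorem mnlPS0_add_sum_mnlPS (θ : Fin d → ℝ) : mnlPS0 S x θ + ∑ i ∈ S, mnlPS S x θ i = 1 := by
  have hZ : (0 : ℝ) < 1 + ∑ j ∈ S, Real.exp (x j ⬝ᵥ θ) := by positivity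
  simp only [mnlPS0, mnlPS, ← Finset.sum_div]
  field_simp

theorem hasDerivAt_mnlPS_line (θ u : Fin d → ℝ) (i : ι) (s : ℝ) :
    HasDerivAt (fun s : ℝ => mnlPS S x (θ + s • u) i)
      (mnlPS S x (θ + s • u) i *
        (x i ⬝ᵥ u - ∑ j ∈ S, mnlPS S x (θ + s • u) j * (x j ⬝ᵥ u))) s := by
  have hexp (j : ι) : HasDerivAt (fun s : ℝ => Real.exp (x j ⬝ᵥ (θ + s • u)))
      (Real.exp (x j ⬝ᵥ (θ + s • u)) * (x j ⬝ᵥ u)) s := by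
    simp only [dotProduct_add, dotProduct_smul, smul_eq_mul]
    exact (((hasDerivAt_id s).mul_const _).const_add _).exp.congr_deriv (by simp)
  have hZ : HasDerivAt (fun s : ℝ => 1 + ∑ j ∈ S, Real.exp (x j ⬝ᵥ (θ + s • u)))
      (∑ j ∈ S, Real.exp (x j ⬝ᵥ (θ + s • u)) * (x j ⬝ᵥ u)) s :=
    (HasDerivAt.fun_sum fun j _ => hexp j).const_add 1
  have hZpos : (0 : ℝ) < 1 + ∑ j ∈ S, Real.exp (x j ⬝ᵥ (θ + s • u)) := by positivity
  refine ((hexp i).div hZ hZpos.ne').congr_deriv ?_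
  simp only [mnlPS, ← Finset.sum_div, div_mul_eq_mul_div]
  field_simp

theorem hasDerivAt_sum_mnlPS_mul_line (θ u : Fin d → ℝ) (s : ℝ) :
    HasDerivAt (fun s : ℝ => ∑ i ∈ S, mnlPS S x (θ + s • u) i * (x i ⬝ᵥ u))
      (∑ i ∈ S, mnlPS S x (θ + s • u) i * (x i ⬝ᵥ u) ^ 2 -
        (∑ i ∈ S, mnlPS S x (θ + s • u) i * (x i ⬝ᵥ u)) ^ 2) s := by
  refine (HasDerivAt.fun_sum fun i _ =>
    (hasDerivAt_mnlPS_line S x θ u i s).mul_const (x i ⬝ᵥ u)).congr_deriv ?_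
  rw [sq (∑ i ∈ S, _), Finset.sum_mul, ← Finset.sum_sub_distrib]
  exact Finset.sum_congr rfl fun i _ => by ring

theorem mul_sum_sq_le_sum_sub_mnlPS_mul (θ₀ θ : Fin d → ℝ) {κ : ℝ}
    (hκ : ∀ s ∈ Set.Icc (0 : ℝ) 1, ∀ i ∈ S,
      κ ≤ mnlPS S x (θ₀ + s • (θ - θ₀)) i * mnlPS0 S x (θ₀ + s • (θ - θ₀))) :
    κ * ∑ i ∈ S, (x i ⬝ᵥ (θ - θ₀)) ^ 2 ≤
      ∑ i ∈ S, (mnlPS S x θ i - mnlPS S x θ₀ i) * (x i ⬝ᵥ (θ - θ₀)) := by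
  set u := θ - θ₀
  have hφ := hasDerivAt_sum_mnlPS_mul_line S x θ₀ u
  have hφ' : Differentiable ℝ fun s : ℝ => ∑ i ∈ S, mnlPS S x (θ₀ + s • u) i * (x i ⬝ᵥ u) :=
    fun s => (hφ s).differentiableAt
  have hmvt := (convex_Icc (0 : ℝ) 1).mul_sub_le_image_sub_of_le_deriv
    hφ'.continuous.continuousOn hφ'.differentiableOn
    (fun s hs => by
      rw [(hφ s).deriv]
      exact mul_sum_sq_le_sum_mul_sq_sub_sq (fun i _ => mnlPS_nonneg S x _ i)
        (mnlPS0_add_sum_mnlPS S x _) (hκ s (interior_subset hs)))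
    0 (Set.left_mem_Icc.mpr zero_le_one) 1 (Set.right_mem_Icc.mpr zero_le_one) zero_le_one
  simpa [u, ← Finset.sum_sub_distrib, sub_mul] using hmvt

end MNL

theorem stmt15_general {d n : ℕ} {ι : Type*}
    (S : ℕ → Finset ι) (x : ℕ → ι → Fin d → ℝ) (θstar : Fin d → ℝ)
    (V : Matrix (Fin d) (Fin d) ℝ)
    (hVdef : V = ∑ t ∈ Finset.range n, ∑ i ∈ S t, vecMulVec (x t i) (x t i))
    (hV : V.PosDef)
    (η κη : ℝ) (hκ : 0 < κη)
    (hp : ∀ t ∈ Finset.range n, ∀ i ∈ S t, ∀ θ : Fin d → ℝ,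
      Real.sqrt (∑ j, (θ j - θstar j) ^ 2) ≤ η →
        κη ≤ mnlPS (S t) (x t) θ i * mnlPS0 (S t) (x t) θ)
    (J : (Fin d → ℝ) → Fin d → ℝ)
    (hJ : ∀ θ, J θ = ∑ t ∈ Finset.range n, ∑ i ∈ S t,
        (mnlPS (S t) (x t) θ i - mnlPS (S t) (x t) θstar i) • x t i) :
    ∀ θ : Fin d → ℝ, Real.sqrt (∑ j, (θ j - θstar j) ^ 2) ≤ η →
      κη ^ 2 * lambdaMin V hV.isHermitian * (∑ j, (θ j - θstar j) ^ 2)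
        ≤ J θ ⬝ᵥ V⁻¹ *ᵥ J θ := by
  intro θ hθ
  set u := θ - θstar
  have hquad : u ⬝ᵥ V *ᵥ u = ∑ t ∈ Finset.range n, ∑ i ∈ S t, (x t i ⬝ᵥ u) ^ 2 := by
    simp only [hVdef, sum_mulVec, dotProduct_sum, dotProduct_vecMulVec_self_mulVec]
  have hmono : κη * (u ⬝ᵥ V *ᵥ u) ≤ J θ ⬝ᵥ u := by
    rw [hquad, Finset.mul_sum, hJ, sum_dotProduct]
    refine Finset.sum_le_sum fun t ht => ?_
    simp only [sum_dotProduct, smul_dotProduct, smul_eq_mul]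
    exact mul_sum_sq_le_sum_sub_mnlPS_mul (S t) (x t) θstar θ fun s hs i hi =>
      hp t ht i hi _ ((sqrt_sum_sq_add_smul_sub_le θstar u hs).trans hθ)
  have hCS := hV.sq_dotProduct_le_mul (J θ) u
  have hQ : 0 ≤ u ⬝ᵥ V *ᵥ u := by simpa using hV.posSemidef.dotProduct_mulVec_nonneg u
  have hR : 0 ≤ J θ ⬝ᵥ V⁻¹ *ᵥ J θ := by
    simpa using hV.inv.posSemidef.dotProduct_mulVec_nonneg (J θ)
  have hsq : ∑ j, (θ j - θstar j) ^ 2 = u ⬝ᵥ u := by simp [u, dotProduct, sq]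
  rw [hsq, mul_assoc, lambdaMin]
  calc κη ^ 2 * ((⨅ i, hV.isHermitian.eigenvalues i) * (u ⬝ᵥ u))
      ≤ κη ^ 2 * (u ⬝ᵥ V *ᵥ u) := by
        gcongr; exact hV.isHermitian.iInf_eigenvalues_mul_dotProduct_le u
    _ ≤ J θ ⬝ᵥ V⁻¹ *ᵥ J θ := by
        rcases hQ.eq_or_lt with hQ0 | hQpos
        · rwa [← hQ0, mul_zero]
        · refine le_of_mul_le_mul_right ?_ hQpos
          nlinarith [pow_le_pow_left₀ (by positivity) hmono 2]

/-- Strong-monotonicity lower bound for the expected MNL score function: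
`‖J(θ)‖²_{V⁻¹} ≥ κ_η² λ_min(V) ‖θ − θ*‖₂²` for all `θ` with `‖θ − θ*‖ ≤ η`. -/
theorem stmt15 {d n : ℕ} {ι : Type*}
    (S : ℕ → Finset ι) (x : ℕ → ι → Fin d → ℝ) (θstar : Fin d → ℝ)
    (V : Matrix (Fin d) (Fin d) ℝ)
    (hVdef : V = ∑ t ∈ Finset.range n, ∑ i ∈ S t, vecMulVec (x t i) (x t i))
    (hV : V.PosDef)
    (η κη : ℝ) (hη : 0 < η) (hκ : 0 < κη)
    (hp : ∀ t ∈ Finset.range n, ∀ i ∈ S t, ∀ θ : Fin d → ℝ,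
      Real.sqrt (∑ j, (θ j - θstar j) ^ 2) ≤ η →
        κη ≤ mnlPS (S t) (x t) θ i * mnlPS0 (S t) (x t) θ)
    (J : (Fin d → ℝ) → Fin d → ℝ)
    (hJ : ∀ θ, J θ = ∑ t ∈ Finset.range n, ∑ i ∈ S t,
        (mnlPS (S t) (x t) θ i - mnlPS (S t) (x t) θstar i) • x t i) :
    ∀ θ : Fin d → ℝ, Real.sqrt (∑ j, (θ j - θstar j) ^ 2) ≤ η →
      κη ^ 2 * lambdaMin V hV.isHermitian * (∑ j, (θ j - θstar j) ^ 2)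
        ≤ J θ ⬝ᵥ V⁻¹ *ᵥ J θ :=
  stmt15_general S x θstar V hVdef hV η κη hκ hp J hJ
end
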